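/- arXiv:2009.12497 — 2 statements merged into one kernel-verified Lean document; each statement's English description precedes it below -/
import Mathlib

section
/- Combinatorial core of Theorem 5, second part: let k ≥ 1 and let F be a finite field with q = |F| ≥ 4k − 2. Then for every N ≥ 2k there exists a nonzero linear code C ⊆ F^N such that every nonzero codeword of C and every nonzero codeword of C⊥ has Hamming weight at least k+1 (equivalently, a linear irredundant orthogonal array IrOA(|C|, N, q, k), which yields a k-uniform state of N parties with local dimension q). -/
/-!
For `2k ≤ N ≤ q + 1` take the extended Reed–Solomon code of length `N` and dimension
`K = N - k`: the polynomials of degree `< K`, evaluated at `N - 1` distinct points of `F` and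
"at infinity". A nonzero such polynomial vanishes at fewer than `K` of these `N` places, so
codewords have weight `≥ N - K + 1 = k + 1`; and any `K` coordinates are independent
(Lagrange interpolation), so dual codewords have weight `≥ K + 1 ≥ k + 1`. Both properties
survive direct sums, and since `q ≥ 4k - 2`, every `N > q + 1` splits as `(N - 2k) + 2k`
with both parts `≥ 2k`.
-/

/-- The dual code of a linear code `C ⊆ F^ι`:
`C⊥ = {u : Σ_i u i * v i = 0 for all v ∈ C}`. -/
def dualCode {F : Type*} [Field F] {ι : Type*} [Fintype ι] (C : Submodule F (ι → F)) :
    Submodule F (ι → F) where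
  carrier := {u | ∀ v ∈ C, ∑ i, u i * v i = 0}
  add_mem' := by
    intro a b ha hb v hv
    simp only [Pi.add_apply, add_mul, Finset.sum_add_distrib]
    rw [ha v hv, hb v hv, add_zero]
  zero_mem' := by intro v hv; simp
  smul_mem' := by
    intro a u hu v hv
    simp only [Pi.smul_apply, smul_eq_mul, mul_assoc, ← Finset.mul_sum]
    rw [hu v hv, mul_zero]

open Finset Polynomial

section

variable {F : Type*} [Field F] {ι κ : Type*}

theorem Submodule.comap_ne_bot_of_surjective {R M N : Type*} [Semiring R] [AddCommMonoid M]
    [Module R M] [AddCommMonoid N] [Module R N] {f : M →ₗ[R] N} (hf : Function.Surjective f)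
    {C : Submodule R N} (hC : C ≠ ⊥) : C.comap f ≠ ⊥ :=
  fun h => hC (by rw [← Submodule.map_comap_eq_of_surjective hf C, h, Submodule.map_bot])

def sumCode (C₁ : Submodule F (ι → F)) (C₂ : Submodule F (κ → F)) :
    Submodule F (ι ⊕ κ → F) :=
  (C₁.prod C₂).comap (LinearEquiv.sumArrowLequivProdArrow ι κ F F).toLinearMap

theorem mem_sumCode {C₁ : Submodule F (ι → F)} {C₂ : Submodule F (κ → F)} {w : ι ⊕ κ → F} :
    w ∈ sumCode C₁ C₂ ↔ w ∘ Sum.inl ∈ C₁ ∧ w ∘ Sum.inr ∈ C₂ :=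
  Iff.rfl

theorem sumCode_ne_bot {C₁ : Submodule F (ι → F)} (C₂ : Submodule F (κ → F)) (h : C₁ ≠ ⊥) :
    sumCode C₁ C₂ ≠ ⊥ :=
  Submodule.comap_ne_bot_of_surjective (LinearEquiv.surjective _)
    fun h' => h ((Submodule.prod_eq_bot_iff _ _ _).mp h').1

/-- At the extra coordinate `none`, the coefficient of `X ^ m` plays the role of evaluation at
infinity. -/
noncomputable def extendedEval (a : ι → F) (m : ℕ) : F[X] →ₗ[F] (Option ι → F) :=
  LinearMap.pi fun i => i.elim (lcoeff F m) fun j => leval (a j)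

@[simp]
theorem extendedEval_none (a : ι → F) (m : ℕ) (p : F[X]) :
    extendedEval a m p none = p.coeff m :=
  rfl

@[simp]
theorem extendedEval_some (a : ι → F) (m : ℕ) (p : F[X]) (i : ι) :
    extendedEval a m p (some i) = p.eval (a i) :=
  rfl

noncomputable def extendedRSCode (a : ι → F) (K : ℕ) : Submodule F (Option ι → F) :=
  (degreeLT F K).map (extendedEval a (K - 1))

theorem extendedRSCode_ne_bot (a : ι → F) {K : ℕ} (hK : 1 ≤ K) : extendedRSCode a K ≠ ⊥ := by
  intro h
  have hX : extendedEval a (K - 1) (X ^ (K - 1)) ∈ extendedRSCode a K :=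
    Submodule.mem_map_of_mem <| mem_degreeLT.mpr <| by
      rw [degree_X_pow]; exact_mod_cast Nat.sub_one_lt_of_lt hK
  rw [h, Submodule.mem_bot] at hX
  simpa using congrFun hX none

theorem exists_extendedEval_separating_some {a : ι → F} (ha : Function.Injective a) {K : ℕ}
    {S : Finset (Option ι)} (hS : #S ≤ K) {x : ι} (hx : some x ∈ S) :
    ∃ p ∈ degreeLT F K, extendedEval a (K - 1) p (some x) ≠ 0 ∧
      ∀ j ∈ S, j ≠ some x → extendedEval a (K - 1) p j = 0 := by
  classical
  have hx' : x ∈ S.eraseNone := mem_eraseNone.mpr hx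
  have hinj : Set.InjOn a S.eraseNone := ha.injOn
  have hT := card_eraseNone_le S
  have hS1 : 1 ≤ #S := card_pos.mpr ⟨_, hx⟩
  refine ⟨Lagrange.basis S.eraseNone a x, ?_, ?_, ?_⟩
  · rw [mem_degreeLT, Lagrange.degree_basis hinj hx']
    exact_mod_cast (by omega : #S.eraseNone - 1 < K)
  · rw [extendedEval_some, Lagrange.eval_basis_self hinj hx']
    exact one_ne_zero
  rintro (_ | j) hj hjx
  · have hT' := card_eraseNone_of_mem hj
    have hS2 : 2 ≤ #S := by
      simpa using card_le_card (insert_subset hj (singleton_subset_iff.mpr hx))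
    rw [extendedEval_none]
    apply coeff_eq_zero_of_natDegree_lt
    rw [Lagrange.natDegree_basis hinj hx']
    omega
  · exact Lagrange.eval_basis_of_ne (by simpa [eq_comm] using hjx) (mem_eraseNone.mpr hj)

theorem exists_extendedEval_separating_none (a : ι → F) {K : ℕ} {S : Finset (Option ι)}
    (hS : #S ≤ K) (hn : none ∈ S) :
    ∃ p ∈ degreeLT F K, extendedEval a (K - 1) p none ≠ 0 ∧
      ∀ j ∈ S, j ≠ none → extendedEval a (K - 1) p j = 0 := by
  have hT := card_eraseNone_of_mem hn
  have hS1 : 1 ≤ #S := card_pos.mpr ⟨_, hn⟩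
  -- The power of `X` pads the nodal polynomial to degree exactly `K - 1`.
  set p := X ^ (K - 1 - #S.eraseNone) * Lagrange.nodal S.eraseNone a
  have hmonic : p.Monic := (monic_X_pow _).mul Lagrange.nodal_monic
  have hdeg : p.natDegree = K - 1 := by
    rw [(monic_X_pow _).natDegree_mul Lagrange.nodal_monic, natDegree_X_pow,
      Lagrange.natDegree_nodal]
    omega
  refine ⟨p, ?_, ?_, ?_⟩
  · rw [mem_degreeLT, degree_eq_natDegree hmonic.ne_zero, hdeg]
    exact_mod_cast (by omega : K - 1 < K)
  · rw [extendedEval_none, ← hdeg, hmonic.coeff_natDegree]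
    exact one_ne_zero
  · rintro (_ | j) hj hjn
    · exact absurd rfl hjn
    · simp [p, Lagrange.eval_nodal_at_node (mem_eraseNone.mpr hj)]

variable [Fintype ι] [Fintype κ]

theorem mem_dualCode {C : Submodule F (ι → F)} {u : ι → F} :
    u ∈ dualCode C ↔ ∀ v ∈ C, ∑ i, u i * v i = 0 :=
  Iff.rfl

theorem dualCode_comap_funLeft (σ : ι ≃ κ) (C : Submodule F (ι → F)) :
    dualCode (C.comap (LinearMap.funLeft F F σ)) =
      (dualCode C).comap (LinearMap.funLeft F F σ) := by
  ext u
  simp only [Submodule.mem_comap, mem_dualCode, LinearMap.funLeft_apply]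
  refine ⟨fun h c hc => ?_, fun h v hv => ?_⟩
  · rw [← h (c ∘ σ.symm) (by convert hc; ext; simp), ← σ.sum_comp]
    simp
  · rw [← σ.sum_comp]
    exact h _ hv

theorem dualCode_sumCode (C₁ : Submodule F (ι → F)) (C₂ : Submodule F (κ → F)) :
    dualCode (sumCode C₁ C₂) = sumCode (dualCode C₁) (dualCode C₂) := by
  ext u
  simp only [mem_sumCode, mem_dualCode, Fintype.sum_sum_type]
  refine ⟨fun h => ⟨fun v hv => ?_, fun v hv => ?_⟩, fun h v hv => ?_⟩
  · simpa using h (Sum.elim v 0) ⟨hv, C₂.zero_mem⟩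
  · simpa using h (Sum.elim 0 v) ⟨C₁.zero_mem, hv⟩
  · exact (congrArg₂ (· + ·) (h.1 _ hv.1) (h.2 _ hv.2)).trans (add_zero 0)

variable [DecidableEq F]

def MinWeightGE (d : ℕ) (C : Submodule F (ι → F)) : Prop :=
  ∀ c ∈ C, c ≠ 0 → d ≤ hammingNorm c

/-- The codes of linear irredundant orthogonal arrays `IrOA(|C|, N, q, k)`. -/
def IsIrOACode (k : ℕ) (C : Submodule F (ι → F)) : Prop :=
  C ≠ ⊥ ∧ MinWeightGE (k + 1) C ∧ MinWeightGE (k + 1) (dualCode C)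

theorem MinWeightGE.mono {d d' : ℕ} {C : Submodule F (ι → F)} (h : MinWeightGE d C)
    (hd : d' ≤ d) : MinWeightGE d' C :=
  fun c hc hc0 => hd.trans (h c hc hc0)

theorem minWeightGE_dualCode_of_separating {d : ℕ} {C : Submodule F (ι → F)}
    (h : ∀ S : Finset ι, #S < d → ∀ i ∈ S, ∃ c ∈ C, c i ≠ 0 ∧ ∀ j ∈ S, j ≠ i → c j = 0) :
    MinWeightGE d (dualCode C) := by
  intro u hu hu0
  by_contra! hlt
  obtain ⟨i, hi⟩ := Function.ne_iff.mp hu0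
  obtain ⟨c, hc, hci, hcS⟩ := h {j | u j ≠ 0} hlt i (by simpa using hi)
  have hsum : ∑ j, u j * c j = u i * c i := by
    refine sum_eq_single i (fun j _ hji => ?_) (by simp)
    by_cases huj : u j = 0
    · rw [huj, zero_mul]
    · rw [hcS j (by simpa using huj) hji, mul_zero]
  exact mul_ne_zero hi hci (hsum ▸ hu c hc)

theorem hammingNorm_comp_equiv {β : Type*} [Zero β] [DecidableEq β] (σ : ι ≃ κ) (w : κ → β) :
    hammingNorm (w ∘ σ) = hammingNorm w :=
  card_equiv σ (by simp)

theorem hammingNorm_sum {β : Type*} [Zero β] [DecidableEq β] (w : ι ⊕ κ → β) :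
    hammingNorm w = hammingNorm (w ∘ Sum.inl) + hammingNorm (w ∘ Sum.inr) := by
  simp only [hammingNorm, card_filter, Fintype.sum_sum_type, Function.comp_apply]

theorem MinWeightGE.comap_funLeft {d : ℕ} {C : Submodule F (ι → F)} (h : MinWeightGE d C)
    (σ : ι ≃ κ) : MinWeightGE d (C.comap (LinearMap.funLeft F F σ)) := by
  intro w hw hw0
  rw [← hammingNorm_comp_equiv σ]
  exact h _ hw fun h0 => hw0 (σ.surjective.injective_comp_right h0)

theorem MinWeightGE.sumCode {d : ℕ} {C₁ : Submodule F (ι → F)} {C₂ : Submodule F (κ → F)}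
    (h₁ : MinWeightGE d C₁) (h₂ : MinWeightGE d C₂) : MinWeightGE d (sumCode C₁ C₂) := by
  intro w hw hw0
  rw [hammingNorm_sum]
  by_cases hl : w ∘ Sum.inl = 0
  · have hr : w ∘ Sum.inr ≠ 0 := fun hr =>
      hw0 (by ext (i | i); exacts [congrFun hl i, congrFun hr i])
    exact (h₂ _ hw.2 hr).trans (Nat.le_add_left _ _)
  · exact (h₁ _ hw.1 hl).trans (Nat.le_add_right _ _)

theorem IsIrOACode.comap_funLeft {k : ℕ} {C : Submodule F (ι → F)} (h : IsIrOACode k C)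
    (σ : ι ≃ κ) : IsIrOACode k (C.comap (LinearMap.funLeft F F σ)) :=
  ⟨Submodule.comap_ne_bot_of_surjective
      (LinearMap.funLeft_surjective_of_injective _ _ _ σ.injective) h.1,
    h.2.1.comap_funLeft σ, dualCode_comap_funLeft σ C ▸ h.2.2.comap_funLeft σ⟩

theorem IsIrOACode.sumCode {k : ℕ} {C₁ : Submodule F (ι → F)} {C₂ : Submodule F (κ → F)}
    (h₁ : IsIrOACode k C₁) (h₂ : IsIrOACode k C₂) : IsIrOACode k (sumCode C₁ C₂) :=
  ⟨sumCode_ne_bot C₂ h₁.1, h₁.2.1.sumCode h₂.2.1,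
    dualCode_sumCode C₁ C₂ ▸ h₁.2.2.sumCode h₂.2.2⟩

theorem hammingNorm_option {β : Type*} [Zero β] [DecidableEq β] (w : Option ι → β) :
    hammingNorm w = (if w none ≠ 0 then 1 else 0) + hammingNorm (w ∘ some) := by
  simp only [hammingNorm, card_filter, Fintype.sum_option, Function.comp_apply]

theorem card_sub_natDegree_le_hammingNorm_eval {R : Type*} [CommRing R] [IsDomain R]
    [DecidableEq R] {a : ι → R} (ha : Function.Injective a) {p : R[X]} (hp : p ≠ 0) :
    Fintype.card ι - p.natDegree ≤ hammingNorm fun i => p.eval (a i) := by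
  have hroots : #{i | p.eval (a i) = 0} ≤ p.natDegree := by
    rw [← card_map ⟨a, ha⟩]
    refine card_le_degree_of_subset_roots fun x hx => ?_
    obtain ⟨i, hi, rfl⟩ := mem_map.mp hx
    exact (mem_roots hp).mpr (by simpa using hi)
  have hsplit := card_filter_add_card_filter_not (s := univ) fun i => p.eval (a i) = 0
  simp only [card_univ] at hsplit
  simp only [hammingNorm, ne_eq]
  omega

theorem minWeightGE_extendedRSCode {a : ι → F} (ha : Function.Injective a) (K : ℕ) :
    MinWeightGE (Fintype.card ι + 2 - K) (extendedRSCode a K) := by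
  rintro _ ⟨p, hp, rfl⟩ hc
  have hp0 : p ≠ 0 := by rintro rfl; exact hc (map_zero _)
  have hdeg : p.natDegree < K := (natDegree_lt_iff_degree_lt hp0).mpr (mem_degreeLT.mp hp)
  have htop : p.coeff (K - 1) = 0 → p.natDegree ≠ K - 1 := fun h hK =>
    leadingCoeff_ne_zero.mpr hp0 (by rwa [leadingCoeff, hK])
  have heval := card_sub_natDegree_le_hammingNorm_eval ha hp0
  rw [hammingNorm_option, extendedEval_none]
  change _ ≤ _ + hammingNorm fun i => p.eval (a i)
  split_ifs with h
  · omega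
  · have := htop (not_not.mp h)
    omega

theorem minWeightGE_dualCode_extendedRSCode {a : ι → F} (ha : Function.Injective a) (K : ℕ) :
    MinWeightGE (K + 1) (dualCode (extendedRSCode a K)) := by
  refine minWeightGE_dualCode_of_separating fun S hS i hi => ?_
  obtain ⟨p, hp, hpi, hpS⟩ : ∃ p ∈ degreeLT F K, extendedEval a (K - 1) p i ≠ 0 ∧
      ∀ j ∈ S, j ≠ i → extendedEval a (K - 1) p j = 0 := by
    rcases i with _ | x
    · exact exists_extendedEval_separating_none a (by omega) hi
    · exact exists_extendedEval_separating_some ha (by omega) hi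
  exact ⟨_, Submodule.mem_map_of_mem hp, hpi, hpS⟩

theorem isIrOACode_extendedRSCode {a : ι → F} (ha : Function.Injective a) {k : ℕ}
    (hk : 2 * k ≤ Fintype.card ι + 1) : IsIrOACode k (extendedRSCode a (Fintype.card ι + 1 - k)) :=
  ⟨extendedRSCode_ne_bot a (by omega), (minWeightGE_extendedRSCode ha _).mono (by omega),
    (minWeightGE_dualCode_extendedRSCode ha _).mono (by omega)⟩

theorem exists_isIrOACode_of_le_card_add_one [Fintype F] {k N : ℕ} (hN : 2 * k ≤ N)
    (hN₀ : N ≠ 0) (hNq : N ≤ Fintype.card F + 1) :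
    ∃ C : Submodule F (Fin N → F), IsIrOACode k C := by
  obtain ⟨m, rfl⟩ : ∃ m, N = m + 1 := Nat.exists_eq_succ_of_ne_zero hN₀
  obtain ⟨a⟩ : Nonempty (Fin m ↪ F) :=
    Function.Embedding.nonempty_iff_card_le.mpr (by simpa using hNq)
  exact ⟨_, (isIrOACode_extendedRSCode a.injective (by simpa using hN)).comap_funLeft
    (finSuccEquiv m).symm⟩

end

/-- Theorem 5, second part (combinatorial core): if `k ≥ 1` and `q = |F| ≥ 4k - 2`,
then for every `N ≥ 2k` there is a nonzero linear code `C ⊆ F^N` such that every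
nonzero codeword of `C` and of `C⊥` has Hamming weight at least `k + 1` (a linear
irredundant orthogonal array `IrOA(|C|, N, q, k)`, yielding a `k`-uniform state of
`N` parties with local dimension `q`). -/
theorem linear_irOA_of_card_ge_four_k_sub_two (F : Type*) [Field F] [Fintype F]
    [DecidableEq F] (k : ℕ) (hk : 1 ≤ k) (hq : 4 * k - 2 ≤ Fintype.card F) :
    ∀ N : ℕ, 2 * k ≤ N →
      ∃ C : Submodule F (Fin N → F), C ≠ ⊥ ∧
        (∀ c ∈ C, c ≠ 0 → k + 1 ≤ hammingNorm c) ∧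
        (∀ u ∈ dualCode C, u ≠ 0 → k + 1 ≤ hammingNorm u) := by
  intro N hN
  induction N using Nat.strong_induction_on with
  | _ N ih =>
  by_cases hNq : N ≤ Fintype.card F + 1
  · exact exists_isIrOACode_of_le_card_add_one hN (by omega) hNq
  -- Since `q + 2 ≥ 4k`, splitting off a block of length `2k` leaves a length `≥ 2k`.
  obtain ⟨M, rfl⟩ : ∃ M, N = M + 2 * k := ⟨N - 2 * k, by omega⟩
  obtain ⟨C₁, h₁⟩ := ih M (by omega) (by omega)
  obtain ⟨C₂, h₂⟩ := ih (2 * k) (by omega) le_rfl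
  exact ⟨_, IsIrOACode.comap_funLeft (IsIrOACode.sumCode h₁ h₂) finSumFinEquiv⟩
end

section
/- Core of Proposition 8 (impossibility of strong masking for even N, after Schmidt decomposition): let J be a nonempty finite index set, (λ_j)_{j∈J} real numbers with λ_j > 0, and (b_j)_{j∈J}, (c_j)_{j∈J} orthonormal families in a complex inner product space H. Then the following two conditions cannot hold simultaneously: (i) for every u, v ∈ ℂ with |u|² + |v|² = 1 the family (u • b_j + v • c_j)_{j∈J} is orthonormal; and (ii) the linear maps x ↦ Σ_{j∈J} λ_j · ⟪b_j, x⟫ • b_j and x ↦ Σ_{j∈J} λ_j · ⟪c_j, x⟫ • c_j are equal. -/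
/-!
If every normalized superposition `u • b j + v • c j` is orthonormal, expanding its Gram matrix
shows that the cross terms `conj u * v * ⟪b s, c t⟫ + conj v * u * ⟪c s, b t⟫` vanish for all such
`u, v`, and two choices of `(u, v)` force `⟪b s, c t⟫ = 0`. Then the operator
`Σ λ_j |b_j⟩⟨b_j|` kills every `c_t`, while `Σ λ_j |c_j⟩⟨c_j|` sends it to `λ_t c_t ≠ 0`.
-/

open ComplexConjugate

theorem eq_zero_of_forall_conj_mul_add_conj_mul_eq_zero {x y : ℂ}
    (h : ∀ u v : ℂ, ‖u‖ ^ 2 + ‖v‖ ^ 2 = 1 → conj u * v * x + conj v * u * y = 0) : x = 0 := by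
  -- `(3/5, 4/5)` and `(3/5, 4i/5)` isolate `x + y` and `x - y` without square roots.
  have hreal := h (3 / 5) (4 / 5) (by norm_num)
  have himag := h (3 / 5) (4 / 5 * Complex.I) (by simp; norm_num)
  simp only [map_div₀, map_ofNat, map_mul, Complex.conj_I] at hreal himag
  linear_combination (25 / 24 : ℂ) * hreal - (25 / 24 * Complex.I) * himag +
    (x - y) / 2 * Complex.I_sq

section

variable {H : Type*} [NormedAddCommGroup H] [InnerProductSpace ℂ H] {J : Type*} {b c : J → H}

theorem inner_smul_add_smul_of_orthonormal [DecidableEq J] (hb : Orthonormal ℂ b)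
    (hc : Orthonormal ℂ c) (u v : ℂ) (s t : J) :
    inner ℂ (u • b s + v • c s) (u • b t + v • c t) =
      (if s = t then ((‖u‖ ^ 2 + ‖v‖ ^ 2 : ℝ) : ℂ) else 0) +
        (conj u * v * inner ℂ (b s) (c t) + conj v * u * inner ℂ (c s) (b t)) := by
  simp only [inner_add_left, inner_add_right, inner_smul_left, inner_smul_right,
    orthonormal_iff_ite.mp hb, orthonormal_iff_ite.mp hc]
  split_ifs
  · push_cast
    rw [← Complex.conj_mul', ← Complex.conj_mul']
    ring
  · ring

theorem inner_eq_zero_of_forall_orthonormal_superposition (hb : Orthonormal ℂ b)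
    (hc : Orthonormal ℂ c)
    (hsup : ∀ u v : ℂ, ‖u‖ ^ 2 + ‖v‖ ^ 2 = 1 → Orthonormal ℂ (fun j => u • b j + v • c j))
    (s t : J) : inner ℂ (b s) (c t) = 0 := by
  classical
  refine eq_zero_of_forall_conj_mul_add_conj_mul_eq_zero (y := inner ℂ (c s) (b t)) ?_
  intro u v huv
  have h := orthonormal_iff_ite.mp (hsup u v huv) s t
  rw [inner_smul_add_smul_of_orthonormal hb hc, huv] at h
  split_ifs at h <;> simpa using h

theorem Orthonormal.sum_smul_inner_smul_self [Fintype J] (hc : Orthonormal ℂ c) (lam : J → ℂ)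
    (t : J) : ∑ j, (lam j * inner ℂ (c j) (c t)) • c j = lam t • c t := by
  classical
  simp [orthonormal_iff_ite.mp hc]

end

/-- Core of the impossibility of strong masking for even `N`: for a nonempty finite
index set `J`, positive weights `(lam j)`, and orthonormal families `(b j)`, `(c j)`
in a complex inner product space, it cannot happen simultaneously that (i) every
normalized superposition `(u • b j + v • c j)` is an orthonormal family, and (ii) the
operators `Σ_j lam j |b j⟩⟨b j|` and `Σ_j lam j |c j⟩⟨c j|` coincide. -/
theorem no_strong_masking_core
    {H : Type*} [NormedAddCommGroup H] [InnerProductSpace ℂ H]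
    {J : Type*} [Fintype J] [Nonempty J]
    (b c : J → H) (hb : Orthonormal ℂ b) (hc : Orthonormal ℂ c)
    (lam : J → ℝ) (hlam : ∀ j, 0 < lam j) :
    ¬ ((∀ u v : ℂ, ‖u‖ ^ 2 + ‖v‖ ^ 2 = 1 →
          Orthonormal ℂ (fun j => u • b j + v • c j)) ∧
        (fun x : H => ∑ j, (((lam j : ℝ) : ℂ) * (inner ℂ (b j) x : ℂ)) • b j) =
          (fun x : H => ∑ j, (((lam j : ℝ) : ℂ) * (inner ℂ (c j) x : ℂ)) • c j)) := by
  rintro ⟨hsup, hop⟩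
  obtain ⟨t⟩ := ‹Nonempty J›
  have h := congrFun hop (c t)
  simp only [inner_eq_zero_of_forall_orthonormal_superposition hb hc hsup, mul_zero, zero_smul,
    Finset.sum_const_zero, hc.sum_smul_inner_smul_self] at h
  exact smul_ne_zero (Complex.ofReal_ne_zero.mpr (hlam t).ne') (hc.ne_zero t) h.symm
end
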